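/- arXiv:2301.08459 — 3 statements merged into one kernel-verified Lean document; each statement's English description precedes it below -/
import Mathlib

section
/- Let n ≥ 2 and d ≥ 3, and let g ∈ ℂ[x_1,…,x_n] be a smooth homogeneous polynomial of degree d such that H(g) = x_1^{b_1}⋯x_n^{b_n} is a monomial and such that the Jacobian ideal J(g) is a monomial ideal. Then b_i = d−2 for all i, i.e. H(g) = (x_1⋯x_n)^{d−2}, and g = β_1x_1^d + ⋯ + β_nx_n^d for some constants β_i ∈ ℂ (g is a Fermat polynomial). -/
open MvPolynomial

noncomputable def hessDet {n : ℕ} (f : MvPolynomial (Fin n) ℂ) : MvPolynomial (Fin n) ℂ :=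
  Matrix.det (Matrix.of fun i j => pderiv i (pderiv j f))

/-!
Smoothness at the coordinate point `e_j` forces the pure power `x_j^(d-1)` to occur in some
partial derivative of `g`; since `J(g)` is a monomial ideal it then contains `x_j^(d-1)`, and
taking degree `d-1` parts, the `ℂ`-span of the `n` partials contains the `n` independent pure
powers, hence equals their span. Writing `∂ᵢg = ∑ₖ cᵢₖ xₖ^(d-1)`, symmetry of second derivatives
gives `cᵢₖ (d-1) xₖ^(d-2) = cₖᵢ (d-1) xᵢ^(d-2)`, so for `d ≥ 3` the matrix `c` is diagonal. Euler's
identity then makes `g` a Fermat polynomial, whose Hessian is `∏ cᵢᵢ(d-1) · (x₁⋯xₙ)^(d-2)`.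
-/

theorem LinearIndependent.span_eq_of_le {K V ι : Type*} [DivisionRing K] [AddCommGroup V]
    [Module K V] [Fintype ι] {v w : ι → V} (hv : LinearIndependent K v)
    (hle : Submodule.span K (Set.range v) ≤ Submodule.span K (Set.range w)) :
    Submodule.span K (Set.range v) = Submodule.span K (Set.range w) :=
  have := FiniteDimensional.span_of_finite K (Set.finite_range w)
  Submodule.eq_of_le_of_finrank_le hle <| by
    rw [finrank_span_eq_card hv]
    exact finrank_range_le_card w

namespace MvPolynomial

open Finsupp Set

theorem pderiv_pderiv_comm {R σ : Type*} [CommRing R] (i j : σ) (p : MvPolynomial σ R) :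
    pderiv i (pderiv j p) = pderiv j (pderiv i p) := by
  have h : ⁅pderiv i, pderiv j⁆ = (0 : Derivation R (MvPolynomial σ R) (MvPolynomial σ R)) :=
    derivation_ext fun k => by
      classical
      rw [Derivation.commutator_apply]
      simp [pderiv_X, Pi.single_apply, apply_ite]
  have := DFunLike.congr_fun h p
  rwa [Derivation.commutator_apply, Derivation.zero_apply, sub_eq_zero] at this

variable {R σ : Type*} [CommSemiring R]

theorem homogeneousComponent_mul_of_isHomogeneous {q : MvPolynomial σ R} {e : ℕ}
    (hq : q.IsHomogeneous e) (p : MvPolynomial σ R) :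
    homogeneousComponent e (p * q) = C (coeff 0 p) * q := by
  conv_lhs => rw [← sum_homogeneousComponent p]
  rw [Finset.sum_mul, map_sum, Finset.sum_eq_single 0]
  · rw [homogeneousComponent_zero, homogeneousComponent_of_mem ((isHomogeneous_C σ _).mul hq),
      zero_add, if_pos rfl]
  · intro k _ hk
    rw [homogeneousComponent_of_mem ((homogeneousComponent_isHomogeneous k p).mul hq),
      if_neg (by omega)]
  · simp

theorem mem_span_of_mem_ideal_span_of_isHomogeneous {ι : Type*} [Fintype ι]
    {f : ι → MvPolynomial σ R} {e : ℕ} (hf : ∀ i, (f i).IsHomogeneous e)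
    {p : MvPolynomial σ R} (hp : p.IsHomogeneous e) (hmem : p ∈ Ideal.span (range f)) :
    p ∈ Submodule.span R (range f) := by
  obtain ⟨c, hc⟩ := Ideal.mem_span_range_iff_exists_fun.mp hmem
  refine (Submodule.mem_span_range_iff_exists_fun R).mpr ⟨fun i => coeff 0 (c i), ?_⟩
  rw [← homogeneousComponent_eq_self hp, ← hc, map_sum]
  simp_rw [homogeneousComponent_mul_of_isHomogeneous (hf _), smul_eq_C_mul]

theorem monomial_mem_of_mem_support {S : Set (σ →₀ ℕ)} {p : MvPolynomial σ R}
    (hp : p ∈ Ideal.span ((fun s => monomial s (1 : R)) '' S)) {t : σ →₀ ℕ}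
    (ht : t ∈ p.support) :
    monomial t (1 : R) ∈ Ideal.span ((fun s => monomial s (1 : R)) '' S) := by
  rw [mem_ideal_span_monomial_image] at hp ⊢
  intro u hu
  rw [Finset.mem_singleton.mp (support_monomial_subset hu)]
  exact hp t ht

theorem IsHomogeneous.eval_piSingle_one [DecidableEq σ] {p : MvPolynomial σ R} {e : ℕ}
    (hp : p.IsHomogeneous e) (j : σ) : eval (Pi.single j 1) p = coeff (single j e) p := by
  rw [eval_eq]
  refine (Finset.sum_eq_single (single j e) (fun t ht hne => ?_) (fun h => ?_)).trans ?_
  · obtain ⟨l, hl, hlj⟩ : ∃ l ∈ t.support, l ≠ j := by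
      by_contra! h
      have ht' : t = single j (t j) := support_subset_singleton.mp fun l hl => by simp [h l hl]
      have hdeg : t.degree = e := by_contra fun h => mem_support_iff.mp ht (hp.coeff_eq_zero h)
      rw [ht', degree_single] at hdeg
      exact hne (by rw [ht', hdeg])
    rw [Finset.prod_eq_zero hl (by simp [hlj, Finsupp.mem_support_iff.mp hl]), mul_zero]
  · rw [notMem_support_iff.mp h, zero_mul]
  · rw [Finset.prod_eq_one fun l hl => by
      simp [Finset.mem_singleton.mp (support_single_subset hl)], mul_one]

theorem exists_coeff_single_ne_zero [DecidableEq σ] [Nontrivial R] {ι : Type*}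
    {f : ι → MvPolynomial σ R} {e : ℕ} (hf : ∀ i, (f i).IsHomogeneous e)
    (hzero : ∀ x : σ → R, (∀ i, eval x (f i) = 0) → x = 0) (j : σ) :
    ∃ i, coeff (single j e) (f i) ≠ 0 := by
  by_contra! h
  have := hzero (Pi.single j 1) fun i => by rw [(hf i).eval_piSingle_one, h i]
  simpa using congr_fun this j

variable {K σ : Type*} [Field K]

theorem linearIndependent_monomial_single {e : ℕ} (he : e ≠ 0) :
    LinearIndependent K fun j : σ => monomial (single j e) (1 : K) :=
  (basisMonomials σ K).linearIndependent.comp _ (single_left_injective he)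

theorem span_eq_span_monomial_single [Fintype σ] [DecidableEq σ] {f : σ → MvPolynomial σ K}
    {e : ℕ} (he : e ≠ 0) (hf : ∀ i, (f i).IsHomogeneous e)
    (hzero : ∀ x : σ → K, (∀ i, eval x (f i) = 0) → x = 0) {S : Set (σ →₀ ℕ)}
    (hS : Ideal.span (range f) = Ideal.span ((fun s => monomial s (1 : K)) '' S)) :
    Submodule.span K (range f) = Submodule.span K (range fun j => monomial (single j e) 1) := by
  have hpow (j : σ) : monomial (single j e) 1 ∈ Ideal.span (range f) := by
    obtain ⟨i, hi⟩ := exists_coeff_single_ne_zero hf hzero j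
    rw [hS]
    exact monomial_mem_of_mem_support (hS ▸ Ideal.subset_span ⟨i, rfl⟩) (mem_support_iff.mpr hi)
  refine ((linearIndependent_monomial_single he).span_eq_of_le ?_).symm
  rw [Submodule.span_le, range_subset_iff]
  exact fun j => mem_span_of_mem_ideal_span_of_isHomogeneous hf
    (isHomogeneous_monomial _ (degree_single j e)) (hpow j)

variable [CharZero K] [Fintype σ]

theorem exists_pderiv_eq_monomial {g : MvPolynomial σ K} {e : ℕ} (he : 2 ≤ e)
    (hg : ∀ i, pderiv i g ∈ Submodule.span K (range fun j => monomial (single j e) 1)) :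
    ∃ a : σ → K, ∀ i, pderiv i g = monomial (single i e) (a i) := by
  choose c hc using fun i => (Submodule.mem_span_range_iff_exists_fun K).mp (hg i)
  have hsecond (i k : σ) : pderiv k (pderiv i g) = monomial (single k (e - 1)) (c i k * e) := by
    rw [← hc i, map_sum, Finset.sum_eq_single k]
    · simp [pderiv_monomial, smul_monomial]
    · intro j _ hjk
      simp [pderiv_monomial, smul_monomial, single_eq_of_ne' hjk]
    · simp
  have hoff (i k : σ) (hik : i ≠ k) : c i k = 0 := by
    have hsymm := pderiv_pderiv_comm k i g
    rw [hsecond, hsecond, monomial_eq_monomial_iff] at hsymm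
    rcases hsymm with ⟨hsingle, -⟩ | ⟨hzero, -⟩
    · exact absurd (single_left_injective (by omega) hsingle) hik.symm
    · simpa [show e ≠ 0 by omega] using hzero
  refine ⟨fun i => c i i, fun i => ?_⟩
  rw [← hc i, Finset.sum_eq_single i (fun j _ hji => by rw [hoff i j hji.symm, zero_smul])
    (by simp), smul_monomial, smul_eq_mul, mul_one]

theorem eq_sum_C_mul_X_pow_of_pderiv_eq_monomial {g : MvPolynomial σ K} {d : ℕ}
    (hg : g.IsHomogeneous d) (hd : d ≠ 0) {a : σ → K}
    (ha : ∀ i, pderiv i g = monomial (single i (d - 1)) (a i)) :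
    g = ∑ i, C (a i / d) * X i ^ d := by
  apply smul_right_injective _ (Nat.cast_ne_zero.mpr hd : (d : K) ≠ 0)
  dsimp only
  rw [Nat.cast_smul_eq_nsmul, ← hg.sum_X_mul_pderiv, Finset.smul_sum]
  refine Finset.sum_congr rfl fun i _ => ?_
  rw [ha, C_mul_X_pow_eq_monomial, smul_monomial, X, monomial_mul, ← single_add,
    Nat.add_sub_cancel' (Nat.one_le_iff_ne_zero.mpr hd), smul_eq_mul, one_mul,
    mul_div_cancel₀ _ (Nat.cast_ne_zero.mpr hd)]

end MvPolynomial

open Finsupp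

theorem hessDet_eq_monomial {n : ℕ} {g : MvPolynomial (Fin n) ℂ} {e : ℕ} {a : Fin n → ℂ}
    (ha : ∀ i, pderiv i g = monomial (single i e) (a i)) :
    hessDet g = monomial (∑ i, single i (e - 1)) (∏ i, a i * e) := by
  have hdiag : (Matrix.of fun i j => pderiv i (pderiv j g)) =
      Matrix.diagonal fun i => monomial (single i (e - 1)) (a i * e) := by
    ext i j
    rw [Matrix.of_apply, ha, pderiv_monomial, Matrix.diagonal_apply]
    split_ifs with hij
    · simp [hij]
    · simp [single_eq_of_ne hij]
  rw [hessDet, hdiag, Matrix.det_diagonal, monomial_sum_prod]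

theorem monomial_hessian_monomial_jacobian_general (n d : ℕ) (hd : 3 ≤ d)
    (g : MvPolynomial (Fin n) ℂ) (hhom : g.IsHomogeneous d)
    (hsmooth : ∀ p : Fin n → ℂ, (∀ i, eval p (pderiv i g) = 0) → p = 0)
    (b : Fin n → ℕ) (hH : hessDet g = ∏ i : Fin n, X i ^ b i)
    (hmono : ∃ S : Set (Fin n →₀ ℕ),
      Ideal.span (Set.range fun i => pderiv i g) =
        Ideal.span ((fun s => (monomial s (1 : ℂ) : MvPolynomial (Fin n) ℂ)) '' S)) :
    (∀ i, b i = d - 2) ∧ ∃ β : Fin n → ℂ, g = ∑ i : Fin n, C (β i) * X i ^ d := by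
  obtain ⟨S, hS⟩ := hmono
  have hspan := span_eq_span_monomial_single (by omega) (fun _ => hhom.pderiv) hsmooth hS
  obtain ⟨a, ha⟩ := exists_pderiv_eq_monomial (g := g) (e := d - 1) (by omega)
    fun i => hspan ▸ Submodule.subset_span ⟨i, rfl⟩
  refine ⟨fun i => ?_, _, eq_sum_C_mul_X_pow_of_pderiv_eq_monomial hhom (by omega) ha⟩
  have hhess := hessDet_eq_monomial ha
  simp_rw [hH, X_pow_eq_monomial, ← monomial_sum_one, monomial_eq_monomial_iff] at hhess
  obtain ⟨hexp, -⟩ | ⟨h, -⟩ := hhess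
  · have := DFunLike.congr_fun hexp i
    simp only [coe_univ_sum_single] at this
    omega
  · exact absurd h one_ne_zero

/-- If `g` is a smooth homogeneous polynomial of degree `d ≥ 3` in `n ≥ 2` variables whose
Hessian is a monomial `x_1^{b_1}⋯x_n^{b_n}` and whose Jacobian ideal is a monomial ideal,
then `b_i = d-2` for all `i` and `g` is a Fermat polynomial. -/
theorem monomial_hessian_monomial_jacobian (n d : ℕ) (hn : 2 ≤ n) (hd : 3 ≤ d)
    (g : MvPolynomial (Fin n) ℂ) (hhom : g.IsHomogeneous d)
    (hsmooth : ∀ p : Fin n → ℂ, (∀ i, eval p (pderiv i g) = 0) → p = 0)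
    (b : Fin n → ℕ) (hH : hessDet g = ∏ i : Fin n, X i ^ b i)
    (hmono : ∃ S : Set (Fin n →₀ ℕ),
      Ideal.span (Set.range fun i => pderiv i g) =
        Ideal.span ((fun s => (monomial s (1 : ℂ) : MvPolynomial (Fin n) ℂ)) '' S)) :
    (∀ i, b i = d - 2) ∧ ∃ β : Fin n → ℂ, g = ∑ i : Fin n, C (β i) * X i ^ d :=
  monomial_hessian_monomial_jacobian_general n d hd g hhom hsmooth b hH hmono
end

section
/- Let d ≥ 2, let f = x_1^k x_2^{d−k} ∈ ℂ[x_1,x_2] with 0 < k ≤ d−2, and let dH_f be the differential of the Hessian map at f, restricted to homogeneous binary forms of degree d. Then the dimension of Ker(dH_f) equals the number of integers j with 0 ≤ j ≤ d such that d(k−j)² − d(k+j) + 2kj = 0. -/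
open MvPolynomial

/-- The differential of the Hessian map at a binary form `f`:
`dH_f(g) = g_{11}f_{22} + f_{11}g_{22} - 2f_{12}g_{12}`. -/
noncomputable def dH2 (f : MvPolynomial (Fin 2) ℂ) :
    MvPolynomial (Fin 2) ℂ →ₗ[ℂ] MvPolynomial (Fin 2) ℂ :=
  (LinearMap.mulLeft ℂ (pderiv 1 (pderiv 1 f))).comp
      ((pderiv (R := ℂ) (0 : Fin 2)).toLinearMap.comp (pderiv 0).toLinearMap)
  + (LinearMap.mulLeft ℂ (pderiv 0 (pderiv 0 f))).comp
      ((pderiv (R := ℂ) (1 : Fin 2)).toLinearMap.comp (pderiv 1).toLinearMap)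
  - (LinearMap.mulLeft ℂ (2 * pderiv 0 (pderiv 1 f))).comp
      ((pderiv (R := ℂ) (0 : Fin 2)).toLinearMap.comp (pderiv 1).toLinearMap)

/-- The kernel of the differential of the Hessian map at `f`, restricted to homogeneous
binary forms of degree `d`. -/
noncomputable def kerDH2 (d : ℕ) (f : MvPolynomial (Fin 2) ℂ) :
    Submodule ℂ (MvPolynomial (Fin 2) ℂ) :=
  homogeneousSubmodule (Fin 2) ℂ d ⊓ LinearMap.ker (dH2 f)

/-!
For monomials the Euler identities `xᵢ ∂ᵢ m = mᵢ m` give `xᵢ² ∂ᵢ² m = mᵢ(mᵢ - 1) m` and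
`x₁x₂ ∂₁∂₂ m = m₁m₂ m`, so `x₁²x₂² · dH_f(g) = c(f, g) · fg` for monomials `f, g` with an explicit
integer `c(f, g)`. Since `x₁²x₂²` is a nonzerodivisor, `Ker(dH_f) = Ker(x₁²x₂² · dH_f)`. For
`f = x₁ᵏx₂^{d-k}` the latter map sends the basis `x₁ʲx₂^{d-j}` of degree-`d` forms to multiples
`c_j · x₁^{k+j}x₂^{2d-k-j}` of distinct monomials, so its kernel is spanned by the `x₁ʲx₂^{d-j}` with
`c_j = 0`; and `c_j = (d - 1)(d(k-j)² - d(k+j) + 2kj)`.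
-/

open Submodule

section DiagonalKernel

variable {ι K M N : Type*} [DivisionRing K] [AddCommGroup M] [Module K M] [AddCommGroup N]
  [Module K N] [DecidableEq K] {s : Finset ι} {e : ι → M} {u : ι → N} {c : ι → K}
  {L : M →ₗ[K] N}

theorem span_image_inf_ker_eq_of_apply_eq_smul (hu : LinearIndepOn K u s)
    (hL : ∀ i ∈ s, L (e i) = c i • u i) :
    span K (e '' s) ⊓ LinearMap.ker L = span K (e '' ↑(s.filter fun i => c i = 0)) := by
  apply le_antisymm
  · rintro x ⟨hx, hxL⟩
    obtain ⟨a, rfl⟩ := (mem_span_image_finset_iff_exists_fun' K).mp hx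
    have hac : ∀ i ∈ s, a i * c i = 0 := by
      refine linearIndepOn_finset_iff.mp hu _ ?_
      rw [← LinearMap.mem_ker.mp hxL, map_sum]
      refine Finset.sum_congr rfl fun i hi => ?_
      rw [map_smul, hL i hi, mul_smul]
    rw [← Finset.sum_filter_of_ne (p := fun i => c i = 0) fun i hi hai => ?_]
    · exact sum_mem fun i hi => smul_mem _ _ (subset_span ⟨i, hi, rfl⟩)
    · exact (mul_eq_zero.mp (hac i hi)).resolve_left (left_ne_zero_of_smul hai)
  · rw [span_le]
    rintro _ ⟨i, hi, rfl⟩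
    obtain ⟨his, hci⟩ := Finset.mem_filter.mp hi
    exact ⟨subset_span ⟨i, his, rfl⟩, LinearMap.mem_ker.mpr (by rw [hL i his, hci, zero_smul])⟩

theorem finrank_span_image_inf_ker_eq_card_filter (he : LinearIndepOn K e s)
    (hu : LinearIndepOn K u s) (hL : ∀ i ∈ s, L (e i) = c i • u i) :
    Module.finrank K ↥(span K (e '' s) ⊓ LinearMap.ker L) = (s.filter fun i => c i = 0).card := by
  rw [span_image_inf_ker_eq_of_apply_eq_smul hu hL, Set.image_eq_range,
    finrank_span_eq_card (he.mono (Finset.coe_subset.mpr (Finset.filter_subset _ s)))]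
  exact Fintype.card_coe _

end DiagonalKernel

namespace MvPolynomial

section Euler

variable {σ R : Type*} [CommRing R]

theorem pderiv_X_mul_of_ne {i j : σ} (h : i ≠ j) (p : MvPolynomial σ R) :
    pderiv i (X j * p) = X j * pderiv i p := by
  rw [Derivation.leibniz, pderiv_X_of_ne h.symm, smul_zero, add_zero, smul_eq_mul]

theorem X_sq_mul_pderiv_pderiv_monomial (i : σ) (s : σ →₀ ℕ) (a : R) :
    X i ^ 2 * pderiv i (pderiv i (monomial s a)) = monomial s (a * (s i * (s i - 1))) := by
  calc X i ^ 2 * pderiv i (pderiv i (monomial s a))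
      = X i * pderiv i (X i * pderiv i (monomial s a)) - X i * pderiv i (monomial s a) := by
        rw [Derivation.leibniz, pderiv_X_self, smul_eq_mul, smul_eq_mul]
        ring
    _ = (s i : R) • (s i : R) • monomial s a - (s i : R) • monomial s a := by
        simp only [X_mul_pderiv_monomial, map_nsmul, mul_smul_comm, Nat.cast_smul_eq_nsmul]
    _ = monomial s (a * (s i * (s i - 1))) := by
        rw [smul_smul, ← sub_smul, smul_monomial, smul_eq_mul]
        congr 1
        ring

theorem X_mul_X_mul_pderiv_pderiv_monomial {i j : σ} (hij : i ≠ j) (s : σ →₀ ℕ) (a : R) :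
    X i * X j * pderiv i (pderiv j (monomial s a)) = monomial s (a * (s i * s j)) := by
  rw [mul_assoc, ← pderiv_X_mul_of_ne hij, X_mul_pderiv_monomial, map_nsmul, mul_smul_comm,
    X_mul_pderiv_monomial, smul_smul, ← Nat.cast_smul_eq_nsmul R, smul_monomial, smul_eq_mul]
  congr 1
  push_cast
  ring

end Euler

theorem homogeneousSubmodule_eq_span_monomial (σ R : Type*) [CommSemiring R] (n : ℕ) :
    homogeneousSubmodule σ R n = span R ((fun m => monomial m (1 : R)) '' {m | m.degree = n}) := by
  rw [homogeneousSubmodule_eq_finsupp_supported, AddMonoidAlgebra.supported_eq_span_single]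
  rfl

theorem linearIndepOn_monomial_one {ι σ R : Type*} [CommSemiring R] {f : ι → σ →₀ ℕ}
    {s : Set ι} (hf : Set.InjOn f s) : LinearIndepOn R (fun i => monomial (f i) (1 : R)) s :=
  (basisMonomials σ R).linearIndependent.comp (fun i : s => f i) hf.injective

end MvPolynomial

noncomputable def binaryExp (d j : ℕ) : Fin 2 →₀ ℕ :=
  Finsupp.single 0 j + Finsupp.single 1 (d - j)

@[simp] theorem binaryExp_apply_zero (d j : ℕ) : binaryExp d j 0 = j := by simp [binaryExp]

@[simp] theorem binaryExp_apply_one (d j : ℕ) : binaryExp d j 1 = d - j := by simp [binaryExp]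

theorem X_pow_mul_X_pow_eq_monomial_binaryExp {R : Type*} [CommSemiring R] (d j : ℕ) :
    (X 0 ^ j * X 1 ^ (d - j) : MvPolynomial (Fin 2) R) = monomial (binaryExp d j) 1 := by
  simp [binaryExp, X_pow_eq_monomial, monomial_mul]

theorem setOf_degree_eq_image_binaryExp (d : ℕ) :
    {m : Fin 2 →₀ ℕ | m.degree = d} = binaryExp d '' ↑(Finset.range (d + 1)) := by
  ext m
  simp only [Set.mem_ofPred_eq, Finsupp.degree_eq_sum, Fin.sum_univ_two, Set.mem_image,
    Finset.coe_range, Set.mem_Iio]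
  constructor
  · intro h
    refine ⟨m 0, by omega, ?_⟩
    ext i
    fin_cases i
    · simp
    · simp
      omega
  · rintro ⟨j, hj, rfl⟩
    simp
    omega

theorem homogeneousSubmodule_fin_two_eq_span (R : Type*) [CommSemiring R] (d : ℕ) :
    homogeneousSubmodule (Fin 2) R d =
      span R ((fun j => monomial (binaryExp d j) (1 : R)) '' ↑(Finset.range (d + 1))) := by
  rw [homogeneousSubmodule_eq_span_monomial, setOf_degree_eq_image_binaryExp, Set.image_image]

def dH2Coeff (s t : Fin 2 →₀ ℕ) : ℤ :=
  t 0 * (t 0 - 1) * (s 1 * (s 1 - 1)) + s 0 * (s 0 - 1) * (t 1 * (t 1 - 1))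
    - 2 * (s 0 * s 1) * (t 0 * t 1)

theorem X_sq_mul_X_sq_mul_dH2_monomial (s t : Fin 2 →₀ ℕ) :
    X 0 ^ 2 * X 1 ^ 2 * dH2 (monomial s 1) (monomial t 1) =
      monomial (s + t) (dH2Coeff s t : ℂ) := by
  have h : X 0 ^ 2 * X 1 ^ 2 * dH2 (monomial s 1) (monomial t 1) =
      X 1 ^ 2 * pderiv 1 (pderiv 1 (monomial s 1)) * (X 0 ^ 2 * pderiv 0 (pderiv 0 (monomial t 1)))
      + X 0 ^ 2 * pderiv 0 (pderiv 0 (monomial s 1)) * (X 1 ^ 2 * pderiv 1 (pderiv 1 (monomial t 1)))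
      - C 2 * (X 0 * X 1 * pderiv 0 (pderiv 1 (monomial s 1))
          * (X 0 * X 1 * pderiv 0 (pderiv 1 (monomial t 1)))) := by
    simp only [dH2, LinearMap.add_apply, LinearMap.sub_apply, LinearMap.comp_apply,
      LinearMap.mulLeft_apply, Derivation.coeFn_coe, map_ofNat]
    ring
  rw [h, X_sq_mul_pderiv_pderiv_monomial, X_sq_mul_pderiv_pderiv_monomial,
    X_sq_mul_pderiv_pderiv_monomial, X_sq_mul_pderiv_pderiv_monomial,
    X_mul_X_mul_pderiv_pderiv_monomial zero_ne_one, X_mul_X_mul_pderiv_pderiv_monomial zero_ne_one,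
    monomial_mul, monomial_mul, monomial_mul, C_mul_monomial, ← map_add, ← map_sub]
  congr 1
  simp only [dH2Coeff]
  push_cast
  ring

theorem dH2Coeff_binaryExp {d k j : ℕ} (hk : k ≤ d) (hj : j ≤ d) :
    dH2Coeff (binaryExp d k) (binaryExp d j) =
      ((d : ℤ) - 1) * ((d : ℤ) * ((k : ℤ) - (j : ℤ)) ^ 2 - (d : ℤ) * ((k : ℤ) + (j : ℤ))
        + 2 * (k : ℤ) * (j : ℤ)) := by
  simp only [dH2Coeff, binaryExp_apply_zero, binaryExp_apply_one, Nat.cast_sub hk,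
    Nat.cast_sub hj]
  ring

theorem ker_dH_monomial_count_general (d k : ℕ) (hd : 2 ≤ d) (hkd : k ≤ d - 2) :
    Module.finrank ℂ ↥(kerDH2 d (X 0 ^ k * X 1 ^ (d - k))) =
      ((Finset.range (d + 1)).filter fun j : ℕ =>
        (d : ℤ) * ((k : ℤ) - (j : ℤ)) ^ 2 - (d : ℤ) * ((k : ℤ) + (j : ℤ))
          + 2 * (k : ℤ) * (j : ℤ) = 0).card := by
  classical
  have hX : LinearMap.ker (LinearMap.mulLeft ℂ (X 0 ^ 2 * X 1 ^ 2 : MvPolynomial (Fin 2) ℂ)) = ⊥ :=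
    LinearMap.ker_eq_bot.mpr (mul_right_injective₀ (by simp [X_ne_zero]))
  rw [kerDH2, X_pow_mul_X_pow_eq_monomial_binaryExp, homogeneousSubmodule_fin_two_eq_span,
    ← LinearMap.ker_comp_of_ker_eq_bot _ hX,
    finrank_span_image_inf_ker_eq_card_filter
      (c := fun j => (dH2Coeff (binaryExp d k) (binaryExp d j) : ℂ))
      (u := fun j => monomial (binaryExp d k + binaryExp d j) 1)
      (linearIndepOn_monomial_one fun i _ j _ h => by simpa using congr($h 0))
      (linearIndepOn_monomial_one fun i _ j _ h => by simpa using congr($h 0))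
      fun j _ => by
        rw [LinearMap.comp_apply, LinearMap.mulLeft_apply, X_sq_mul_X_sq_mul_dH2_monomial,
          smul_monomial, smul_eq_mul, mul_one]]
  refine congrArg Finset.card (Finset.filter_congr fun j hj => ?_)
  rw [Int.cast_eq_zero, dH2Coeff_binaryExp (by omega) (by simpa [Nat.lt_succ_iff] using hj),
    mul_eq_zero, or_iff_right (by omega)]

/-- For `f = x_1^k x_2^{d-k}` with `0 < k ≤ d-2`, `d ≥ 2`, the dimension of `Ker(dH_f)`
equals the number of integers `0 ≤ j ≤ d` with `d(k-j)² - d(k+j) + 2kj = 0`. -/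
theorem ker_dH_monomial_count (d k : ℕ) (hd : 2 ≤ d) (hk0 : 0 < k) (hkd : k ≤ d - 2) :
    Module.finrank ℂ ↥(kerDH2 d (X 0 ^ k * X 1 ^ (d - k))) =
      ((Finset.range (d + 1)).filter fun j : ℕ =>
        (d : ℤ) * ((k : ℤ) - (j : ℤ)) ^ 2 - (d : ℤ) * ((k : ℤ) + (j : ℤ))
          + 2 * (k : ℤ) * (j : ℤ) = 0).card :=
  ker_dH_monomial_count_general d k hd hkd
end

section
/- Let d ≥ 3 be a prime and 2 ≤ k ≤ d−2. Let f = Σ_{i=k}^{d} a_i x_1^i x_2^{d−i} ∈ ℂ[x_1,x_2] be a homogeneous polynomial of degree d with a_k ≠ 0. Then the differential dH_f of the Hessian map at f, restricted to homogeneous binary forms of degree d, is injective: dim Ker(dH_f) = 0. -/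
open MvPolynomial

lemma dH2_apply (f g : MvPolynomial (Fin 2) ℂ) :
    dH2 f g = pderiv 1 (pderiv 1 f) * pderiv 0 (pderiv 0 g)
      + pderiv 0 (pderiv 0 f) * pderiv 1 (pderiv 1 g)
      - 2 * pderiv 0 (pderiv 1 f) * pderiv 0 (pderiv 1 g) := by
  simp [dH2, LinearMap.mulLeft_apply, mul_assoc]
noncomputable abbrev sgl (p q : ℕ) : Fin 2 →₀ ℕ := Finsupp.single 0 p + Finsupp.single 1 q

@[simp] lemma sgl_apply0 (p q : ℕ) : sgl p q 0 = p := by simp [sgl]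
@[simp] lemma sgl_apply1 (p q : ℕ) : sgl p q 1 = q := by simp [sgl]

lemma sgl_sub0 (p q : ℕ) : sgl p q - Finsupp.single 0 1 = sgl (p-1) q := by
  ext x; fin_cases x <;> simp [sgl, Finsupp.tsub_apply]

lemma sgl_sub1 (p q : ℕ) : sgl p q - Finsupp.single 1 1 = sgl p (q-1) := by
  ext x; fin_cases x <;> simp [sgl, Finsupp.tsub_apply]

lemma sgl_add (p q p' q' : ℕ) : sgl p q + sgl p' q' = sgl (p+p') (q+q') := by
  ext x; fin_cases x <;> simp [sgl]

lemma pderiv0_sgl (p q : ℕ) (c : ℂ) :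
    pderiv 0 (monomial (sgl p q) c) = monomial (sgl (p-1) q) (c * p) := by
  rw [pderiv_monomial, sgl_sub0, sgl_apply0]

lemma pderiv1_sgl (p q : ℕ) (c : ℂ) :
    pderiv 1 (monomial (sgl p q) c) = monomial (sgl p (q-1)) (c * q) := by
  rw [pderiv_monomial, sgl_sub1, sgl_apply1]

lemma dH2_monomial (i m j n : ℕ) (a b : ℂ) :
    dH2 (monomial (sgl i m) a) (monomial (sgl j n) b) =
      monomial (sgl (i+(j-2)) ((m-2)+n)) ((a*m*((m-1 : ℕ) : ℂ)) * (b*j*((j-1 : ℕ) : ℂ)))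
      + monomial (sgl ((i-2)+j) (m+(n-2))) ((a*i*((i-1 : ℕ) : ℂ)) * (b*n*((n-1 : ℕ) : ℂ)))
      - monomial (sgl ((i-1)+(j-1)) ((m-1)+(n-1))) (2*((a*m*i) * (b*n*j))) := by
  rw [dH2_apply]
  simp only [pderiv0_sgl, pderiv1_sgl]
  rw [mul_assoc 2, monomial_mul, monomial_mul, monomial_mul, sgl_add, sgl_add, sgl_add,
    show (2 : MvPolynomial (Fin 2) ℂ) = C 2 from (map_ofNat C 2).symm, C_mul_monomial]
  norm_num [Nat.sub_sub]

lemma fin2_eq_sgl (m : Fin 2 →₀ ℕ) : m = sgl (m 0) (m 1) := by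
  ext x; fin_cases x <;> simp

lemma degree_fin2 (m : Fin 2 →₀ ℕ) (n : ℕ) (h : (Finsupp.weight 1) m = n) :
    m 0 + m 1 = n := by
  rw [← h, Finsupp.weight_apply, Finsupp.sum]
  rw [Finset.sum_subset (Finset.subset_univ m.support)]
  · simp [Fin.sum_univ_two]
  · intro x _ hx
    simp [Finsupp.notMem_support_iff.mp hx]

lemma homog_rep (d : ℕ) (g : MvPolynomial (Fin 2) ℂ) (hg : g.IsHomogeneous d) :
    g = ∑ j ∈ Finset.range (d+1), monomial (sgl j (d-j)) (coeff (sgl j (d-j)) g) := by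
  classical
  have hsub : g.support ⊆ (Finset.range (d+1)).image (fun j => sgl j (d-j)) := by
    intro m hm
    have hc : coeff m g ≠ 0 := MvPolynomial.mem_support_iff.mp hm
    have hdeg : m 0 + m 1 = d := degree_fin2 m d (hg hc)
    refine Finset.mem_image.mpr ⟨m 0, Finset.mem_range.mpr (by omega), ?_⟩
    rw [show d - m 0 = m 1 by omega]
    exact (fin2_eq_sgl m).symm
  calc g = ∑ m ∈ g.support, monomial m (coeff m g) := g.as_sum
    _ = ∑ m ∈ (Finset.range (d+1)).image (fun j => sgl j (d-j)), monomial m (coeff m g) := by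
        refine Finset.sum_subset hsub ?_
        intro m _ hm
        rw [MvPolynomial.notMem_support_iff.mp hm, map_zero]
    _ = _ := by
        refine Finset.sum_image ?_
        intro p _ q _ h
        have := congrFun (congrArg (DFunLike.coe) h) 0
        simpa using this

lemma dH2_sum_apply (s : Finset ℕ) (F : ℕ → MvPolynomial (Fin 2) ℂ)
    (g : MvPolynomial (Fin 2) ℂ) :
    dH2 (∑ i ∈ s, F i) g = ∑ i ∈ s, dH2 (F i) g := by
  simp only [dH2_apply, map_sum, Finset.sum_mul, Finset.mul_sum, mul_assoc]
  rw [← Finset.sum_add_distrib, ← Finset.sum_sub_distrib]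

lemma sgl_inj {p q p' q' : ℕ} : sgl p q = sgl p' q' ↔ p = p' ∧ q = q' := by
  constructor
  · intro h
    exact ⟨by simpa using congrFun (congrArg DFunLike.coe h) 0,
           by simpa using congrFun (congrArg DFunLike.coe h) 1⟩
  · rintro ⟨rfl, rfl⟩; rfl

lemma pair_coeff (d k j0 : ℕ) (hd : 4 ≤ d) (hk2 : 2 ≤ k) (hkd : k ≤ d - 2) (hj0 : j0 ≤ d)
    (A B : ℂ) :
    coeff (sgl (k+j0-2) (2*d-2-k-j0))
      (dH2 (monomial (sgl k (d-k)) A) (monomial (sgl j0 (d-j0)) B))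
    = A * B * (((d:ℂ)-k)*((d:ℂ)-(k:ℂ)-1)*(j0:ℂ)*((j0:ℂ)-1)
        + (k:ℂ)*((k:ℂ)-1)*((d:ℂ)-j0)*((d:ℂ)-(j0:ℂ)-1)
        - 2*(k:ℂ)*((d:ℂ)-k)*(j0:ℂ)*((d:ℂ)-j0)) := by
  have hcdk : ((d-k:ℕ):ℂ) = (d:ℂ) - k := by
    rw [Nat.cast_sub (by omega)]
  have hcdk1 : ((d-k-1:ℕ):ℂ) = (d:ℂ) - k - 1 := by
    rw [Nat.cast_sub (by omega), Nat.cast_sub (by omega)]; norm_num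
  have hck1 : ((k-1:ℕ):ℂ) = (k:ℂ) - 1 := by
    rw [Nat.cast_sub (by omega)]; norm_num
  have hcdj : ((d-j0:ℕ):ℂ) = (d:ℂ) - j0 := by
    rw [Nat.cast_sub (by omega)]
  rw [dH2_monomial]
  simp only [coeff_add, coeff_sub, coeff_monomial]
  rcases (by omega : j0 = 0 ∨ j0 = 1 ∨ (2 ≤ j0 ∧ j0 ≤ d-2) ∨ j0 = d-1 ∨ j0 = d)
    with rfl | rfl | ⟨h2, h2'⟩ | h4 | h5
  · rw [if_neg (by rw [sgl_inj]; omega), if_pos (by rw [sgl_inj]; omega),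
      if_neg (by rw [sgl_inj]; omega)]
    have : ((d-0-1:ℕ):ℂ) = (d:ℂ) - 1 := by rw [Nat.cast_sub (by omega)]; norm_num
    rw [this, hck1, hcdj]
    push_cast
    ring
  · rw [if_neg (by rw [sgl_inj]; omega), if_pos (by rw [sgl_inj]; omega),
      if_pos (by rw [sgl_inj]; omega)]
    have h1 : ((d-1-1:ℕ):ℂ) = (d:ℂ) - 1 - 1 := by
      rw [Nat.cast_sub (by omega), Nat.cast_sub (by omega)]; norm_num
    have h2 : ((d-1:ℕ):ℂ) = (d:ℂ) - 1 := by rw [Nat.cast_sub (by omega)]; norm_num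
    rw [h1, h2, hcdk, hck1]
    push_cast
    ring
  · have hcj1 : ((j0-1:ℕ):ℂ) = (j0:ℂ) - 1 := by rw [Nat.cast_sub (by omega)]; norm_num
    have hcdj1 : ((d-j0-1:ℕ):ℂ) = (d:ℂ) - j0 - 1 := by
      rw [Nat.cast_sub (by omega), Nat.cast_sub (by omega)]; norm_num
    rw [if_pos (by rw [sgl_inj]; omega), if_pos (by rw [sgl_inj]; omega),
      if_pos (by rw [sgl_inj]; omega), hcdk, hcdk1, hck1, hcdj, hcdj1, hcj1]
    ring
  · have hcj1 : ((j0-1:ℕ):ℂ) = (j0:ℂ) - 1 := by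
      rw [Nat.cast_sub (by omega)]; norm_num
    have hj0c : (j0:ℂ) = (d:ℂ) - 1 := by
      rw [h4, Nat.cast_sub (by omega)]; norm_num
    rw [if_pos (by rw [sgl_inj]; omega), if_neg (by rw [sgl_inj]; omega),
      if_pos (by rw [sgl_inj]; omega), hcdk, hcdk1, hcdj, hcj1, hj0c]
    ring
  · have hcj1 : ((j0-1:ℕ):ℂ) = (j0:ℂ) - 1 := by
      rw [Nat.cast_sub (by omega)]; norm_num
    have hj0c : (j0:ℂ) = (d:ℂ) := by rw [h5]
    rw [if_pos (by rw [sgl_inj]; omega), if_neg (by rw [sgl_inj]; omega),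
      if_neg (by rw [sgl_inj]; omega), hcdk, hcdk1, hcj1, hj0c]
    ring

lemma pair_coeff_zero (d k j0 i j : ℕ) (hk2 : 2 ≤ k) (hik : k ≤ i) (hjj0 : j0 ≤ j)
    (hne : ¬(i = k ∧ j = j0)) (A B : ℂ) :
    coeff (sgl (k+j0-2) (2*d-2-k-j0))
      (dH2 (monomial (sgl i (d-i)) A) (monomial (sgl j (d-j)) B)) = 0 := by
  rw [dH2_monomial]
  simp only [coeff_add, coeff_sub, coeff_monomial]
  have e1 : (if sgl (i+(j-2)) ((d-i-2)+(d-j)) = sgl (k+j0-2) (2*d-2-k-j0)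
      then (A*↑(d-i)*((d-i-1:ℕ):ℂ))*(B*↑j*((j-1:ℕ):ℂ)) else 0) = 0 := by
    rcases le_or_gt j 1 with h | h
    · interval_cases j <;> simp
    · rw [if_neg]; rw [sgl_inj]; omega
  have e2 : (if sgl ((i-2)+j) ((d-i)+(d-j-2)) = sgl (k+j0-2) (2*d-2-k-j0)
      then (A*↑i*((i-1:ℕ):ℂ))*(B*↑(d-j)*((d-j-1:ℕ):ℂ)) else 0) = 0 := by
    rw [if_neg]; rw [sgl_inj]; omega
  have e3 : (if sgl ((i-1)+(j-1)) ((d-i-1)+(d-j-1)) = sgl (k+j0-2) (2*d-2-k-j0)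
      then 2*((A*↑(d-i)*↑i)*(B*↑(d-j)*↑j)) else 0) = 0 := by
    rcases Nat.eq_zero_or_pos j with rfl | h
    · simp
    · rw [if_neg]; rw [sgl_inj]; omega
  rw [e1, e2, e3]
  ring

lemma coeff_total (d k : ℕ) (hd : 4 ≤ d) (hk2 : 2 ≤ k) (hkd : k ≤ d-2) (a b : ℕ → ℂ)
    (j0 : ℕ) (hj0 : j0 ≤ d) (hb : ∀ j < j0, b j = 0) :
    coeff (sgl (k+j0-2) (2*d-2-k-j0))
      (dH2 (∑ i ∈ Finset.Icc k d, monomial (sgl i (d-i)) (a i))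
        (∑ j ∈ Finset.range (d+1), monomial (sgl j (d-j)) (b j)))
    = a k * b j0 * (((d:ℂ)-k)*((d:ℂ)-(k:ℂ)-1)*(j0:ℂ)*((j0:ℂ)-1)
        + (k:ℂ)*((k:ℂ)-1)*((d:ℂ)-j0)*((d:ℂ)-(j0:ℂ)-1)
        - 2*(k:ℂ)*((d:ℂ)-k)*(j0:ℂ)*((d:ℂ)-j0)) := by
  rw [map_sum (dH2 _), MvPolynomial.coeff_sum]
  rw [Finset.sum_eq_single_of_mem j0 (Finset.mem_range.mpr (by omega))]
  · rw [dH2_sum_apply, MvPolynomial.coeff_sum]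
    rw [Finset.sum_eq_single_of_mem k (Finset.mem_Icc.mpr ⟨le_refl k, by omega⟩)]
    · exact pair_coeff d k j0 hd hk2 hkd hj0 (a k) (b j0)
    · intro i hi hik
      exact pair_coeff_zero d k j0 i j0 hk2 (Finset.mem_Icc.mp hi).1 le_rfl
        (by tauto) (a i) (b j0)
  · intro j hj hjne
    rcases lt_or_gt_of_ne hjne with h | h
    · rw [hb j h, monomial_zero, map_zero, coeff_zero]
    · rw [dH2_sum_apply, MvPolynomial.coeff_sum]
      refine Finset.sum_eq_zero fun i hi => ?_
      exact pair_coeff_zero d k j0 i j hk2 (Finset.mem_Icc.mp hi).1 (le_of_lt h)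
        (by omega) (a i) (b j)

lemma E_ne (d k j0 : ℕ) (hprime : Nat.Prime d) (hk2 : 2 ≤ k) (hkd : k ≤ d-2) (hj0 : j0 ≤ d) :
    (((d:ℂ)-k)*((d:ℂ)-(k:ℂ)-1)*(j0:ℂ)*((j0:ℂ)-1)
        + (k:ℂ)*((k:ℂ)-1)*((d:ℂ)-j0)*((d:ℂ)-(j0:ℂ)-1)
        - 2*(k:ℂ)*((d:ℂ)-k)*(j0:ℂ)*((d:ℂ)-j0)) ≠ 0 := by
  have hd : 4 ≤ d := by omega
  set z : ℤ := ((d:ℤ)-k)*((d:ℤ)-(k:ℤ)-1)*(j0:ℤ)*((j0:ℤ)-1)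
        + (k:ℤ)*((k:ℤ)-1)*((d:ℤ)-j0)*((d:ℤ)-(j0:ℤ)-1)
        - 2*(k:ℤ)*((d:ℤ)-k)*(j0:ℤ)*((d:ℤ)-j0) with hz
  have hcast : (((d:ℂ)-k)*((d:ℂ)-(k:ℂ)-1)*(j0:ℂ)*((j0:ℂ)-1)
        + (k:ℂ)*((k:ℂ)-1)*((d:ℂ)-j0)*((d:ℂ)-(j0:ℂ)-1)
        - 2*(k:ℂ)*((d:ℂ)-k)*(j0:ℂ)*((d:ℂ)-j0)) = (z:ℂ) := by
    rw [hz]; push_cast; ring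
  rw [hcast]
  rw [Int.cast_ne_zero]
  have hfac : z = ((d:ℤ)-1) * ((d:ℤ)*(((k:ℤ)-j0)^2-((k:ℤ)+j0)) + 2*k*j0) := by
    rw [hz]; ring
  have hd1 : ((d:ℤ)-1) ≠ 0 := by
    have : (4:ℤ) ≤ (d:ℤ) := by exact_mod_cast hd
    omega
  rw [hfac]
  refine mul_ne_zero hd1 ?_
  set e2 : ℤ := (d:ℤ)*(((k:ℤ)-j0)^2-((k:ℤ)+j0)) + 2*k*j0 with he2
  have hdZ : (4:ℤ) ≤ (d:ℤ) := by exact_mod_cast hd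
  have hkZ : (2:ℤ) ≤ (k:ℤ) := by exact_mod_cast hk2
  have hkdZ : (k:ℤ) ≤ (d:ℤ) - 2 := by
    have : (k:ℤ) ≤ ((d-2:ℕ):ℤ) := by exact_mod_cast hkd
    omega
  have hj0Z : (j0:ℤ) ≤ (d:ℤ) := by exact_mod_cast hj0
  rcases (by omega : j0 = 0 ∨ j0 = d ∨ (0 < j0 ∧ j0 < d)) with rfl | hE | ⟨h1, h2⟩
  · have h : e2 = (d:ℤ)*(k:ℤ)*((k:ℤ)-1) := by rw [he2]; push_cast; ring
    rw [h]
    exact (mul_pos (mul_pos (by omega : (0:ℤ) < (d:ℤ)) (by omega : (0:ℤ) < (k:ℤ)))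
      (by omega : (0:ℤ) < (k:ℤ)-1)).ne'
  · have hj0c : (j0:ℤ) = (d:ℤ) := by exact_mod_cast hE
    have h : e2 = (d:ℤ)*((d:ℤ)-k)*((d:ℤ)-(k:ℤ)-1) := by rw [he2, hj0c]; ring
    rw [h]
    exact (mul_pos (mul_pos (by omega : (0:ℤ) < (d:ℤ)) (by omega : (0:ℤ) < (d:ℤ)-k))
      (by omega : (0:ℤ) < (d:ℤ)-(k:ℤ)-1)).ne' 
  · intro h0
    have hdvd : (d:ℤ) ∣ 2*(k:ℤ)*(j0:ℤ) := by
      refine ⟨-((((k:ℤ)-j0)^2-((k:ℤ)+j0))), ?_⟩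
      have := h0
      rw [he2] at this
      linarith [this]
    have hp : Prime (d:ℤ) := Nat.prime_iff_prime_int.mp hprime
    have hj0Z' : (0:ℤ) < (j0:ℤ) := by exact_mod_cast h1
    have hj0Z'' : (j0:ℤ) < (d:ℤ) := by exact_mod_cast h2
    rcases hp.dvd_mul.mp hdvd with h | h
    · rcases hp.dvd_mul.mp h with h | h
      · have := Int.le_of_dvd (by norm_num) h
        omega
      · have := Int.le_of_dvd (by omega) h
        omega
    · have := Int.le_of_dvd hj0Z' h
      omega

lemma CXX (c : ℂ) (p q : ℕ) :
    C c * X 0 ^ p * (X 1 : MvPolynomial (Fin 2) ℂ) ^ q = monomial (sgl p q) c := by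
  rw [X_pow_eq_monomial, X_pow_eq_monomial, C_apply, monomial_mul, monomial_mul]
  simp [sgl]

/-- For `d ≥ 3` prime, `2 ≤ k ≤ d-2`, and `f = Σ_{i=k}^d a_i x_1^i x_2^{d-i}` with
`a_k ≠ 0`, the differential `dH_f` is injective on degree-`d` forms:
`dim Ker(dH_f) = 0`. -/
theorem ker_dH_prime_degree (d k : ℕ) (hd : 3 ≤ d) (hprime : Nat.Prime d)
    (hk2 : 2 ≤ k) (hkd : k ≤ d - 2) (a : ℕ → ℂ) (hak : a k ≠ 0) :
    Module.finrank ℂ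
      ↥(kerDH2 d (∑ i ∈ Finset.Icc k d, C (a i) * X 0 ^ i * X 1 ^ (d - i))) = 0 := by
  have hd4 : 4 ≤ d := by omega
  have hfrw : (∑ i ∈ Finset.Icc k d, C (a i) * X 0 ^ i * X 1 ^ (d - i))
      = ∑ i ∈ Finset.Icc k d, monomial (sgl i (d-i)) (a i) :=
    Finset.sum_congr rfl fun i _ => CXX (a i) i (d-i)
  have hker : kerDH2 d (∑ i ∈ Finset.Icc k d, C (a i) * X 0 ^ i * X 1 ^ (d - i)) = ⊥ := by
    rw [Submodule.eq_bot_iff]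
    intro g hg
    obtain ⟨hg1, hg2⟩ := Submodule.mem_inf.mp hg
    rw [LinearMap.mem_ker, hfrw] at hg2
    have hg1' : g.IsHomogeneous d := (mem_homogeneousSubmodule d g).mp hg1
    set b : ℕ → ℂ := fun j => coeff (sgl j (d-j)) g with hb
    have hrep := homog_rep d g hg1'
    rw [hrep] at hg2
    have hzero : ∀ j0, j0 ≤ d → b j0 = 0 := by
      intro j0
      induction j0 using Nat.strong_induction_on with
      | _ j0 ih =>
        intro hj0d
        have hbz : ∀ j < j0, b j = 0 := fun j hj => ih j hj (by omega)
        have h := coeff_total d k hd4 hk2 hkd a b j0 hj0d hbz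
        rw [hg2, coeff_zero] at h
        have hE := E_ne d k j0 hprime hk2 hkd hj0d
        have := h.symm
        rcases mul_eq_zero.mp this with h' | h'
        · rcases mul_eq_zero.mp h' with h'' | h''
          · exact absurd h'' hak
          · exact h''
        · exact absurd h' hE
    rw [hrep]
    refine Finset.sum_eq_zero fun j hj => ?_
    rw [show coeff (sgl j (d-j)) g = b j from rfl, hzero j (by
      have := Finset.mem_range.mp hj; omega), monomial_zero]
  rw [hker]
  exact finrank_bot ℂ _
end
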